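/- Let n > 0 and Y(z) = (√n/2)·tanh(√n·z/2 + φ₀), so Y' = -Y² + n/4. Then for any C₀ ∈ ℝ, the function y = C₀/2 - (69/2)n² + 420nY² - 840Y⁴ satisfies the fourth-order equation y'''' + y² - 13n·y'' - C₀y - 324n⁴ + C₀²/4 = 0 on ℝ. -/

import Mathlib

/-!
`Y` solves the Riccati equation `Y' = n/4 - Y²`, so the derivative of a polynomial expression
`p(Y)` is again polynomial in `Y`, namely `p'(Y) (n/4 - Y²)`. Differentiating `y = P(Y)` four times
thus turns the fourth-order equation into a polynomial identity in `Y`.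
-/

open Polynomial

theorem Real.hasDerivAt_tanh (x : ℝ) : HasDerivAt Real.tanh (1 - Real.tanh x ^ 2) x := by
  have h := (Real.hasDerivAt_sinh x).div (Real.hasDerivAt_cosh x) (Real.cosh_pos x).ne'
  rw [show Real.sinh / Real.cosh = Real.tanh from
    funext fun y => (Real.tanh_eq_sinh_div_cosh y).symm] at h
  refine h.congr_deriv ?_
  rw [Real.tanh_eq_sinh_div_cosh]
  field_simp

theorem hasDerivAt_const_mul_tanh (k φ z : ℝ) :
    HasDerivAt (fun z => k * Real.tanh (k * z + φ)) (k ^ 2 - (k * Real.tanh (k * z + φ)) ^ 2) z := by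
  have h := ((Real.hasDerivAt_tanh _).comp z
    (((hasDerivAt_id z).const_mul k).add_const φ)).const_mul k
  refine h.congr_deriv ?_
  simp only [id]
  ring

noncomputable def riccatiDeriv (c : ℝ) (p : ℝ[X]) : ℝ[X] := derivative p * (C c - X ^ 2)

theorem deriv_eval_comp_of_riccati {Y : ℝ → ℝ} {c : ℝ} (hY : ∀ z, HasDerivAt Y (c - Y z ^ 2) z)
    (p : ℝ[X]) : deriv (fun z => p.eval (Y z)) = fun z => (riccatiDeriv c p).eval (Y z) := by
  funext z
  have h : HasDerivAt (fun z => p.eval (Y z)) _ z := (p.hasDerivAt (Y z)).comp z (hY z)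
  rw [h.deriv, riccatiDeriv]
  simp

noncomputable def solitaryProfile (n C₀ : ℝ) : ℝ[X] :=
  C (C₀ / 2 - 69 / 2 * n ^ 2) + C (420 * n) * X ^ 2 - C 840 * X ^ 4

theorem solitaryProfile_riccatiDeriv_identity (n C₀ t : ℝ) :
    let D := riccatiDeriv (n / 4)
    let P := solitaryProfile n C₀
    (D (D (D (D P)))).eval t + P.eval t ^ 2 - 13 * n * (D (D P)).eval t - C₀ * P.eval t
      - 324 * n ^ 4 + C₀ ^ 2 / 4 = 0 := by
  simp only [solitaryProfile, riccatiDeriv, derivative_add, derivative_sub, derivative_mul,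
    derivative_C, derivative_X_pow, eval_add, eval_sub, eval_mul, eval_C, eval_X, eval_pow,
    eval_zero, derivative_zero]
  push_cast
  ring

/-- Exact solitary-wave solution of the fourth-order equation
`y'''' + y² - 13n y'' - C₀y - 324n⁴ + C₀²/4 = 0`. -/
theorem fourth_order_exact_solution (n φ₀ C₀ : ℝ) (hn : 0 < n)
    (Y : ℝ → ℝ)
    (hYdef : Y = fun z => (Real.sqrt n / 2) * Real.tanh (Real.sqrt n * z / 2 + φ₀))
    (y : ℝ → ℝ)
    (hydef : y = fun z => C₀ / 2 - (69 / 2) * n ^ 2 + 420 * n * (Y z) ^ 2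
      - 840 * (Y z) ^ 4) :
    (∀ z, deriv Y z = -(Y z) ^ 2 + n / 4) ∧
      ∀ z, deriv (deriv (deriv (deriv y))) z + (y z) ^ 2
        - 13 * n * deriv (deriv y) z - C₀ * y z - 324 * n ^ 4 + C₀ ^ 2 / 4 = 0 := by
  have hY : ∀ z, HasDerivAt Y (n / 4 - Y z ^ 2) z := by
    intro z
    have hk : (Real.sqrt n / 2) ^ 2 = n / 4 := by
      rw [div_pow, Real.sq_sqrt hn.le]; norm_num
    simpa only [hYdef, hk, mul_div_right_comm] using
      hasDerivAt_const_mul_tanh (Real.sqrt n / 2) φ₀ z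
  have hyP : y = fun z => (solitaryProfile n C₀).eval (Y z) := by
    rw [hydef, solitaryProfile]
    simp
  refine ⟨fun z => by rw [(hY z).deriv]; ring, fun z => ?_⟩
  simp only [hyP, deriv_eval_comp_of_riccati hY]
  exact solitaryProfile_riccatiDeriv_identity n C₀ (Y z)
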